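/- Let G be a finite strategic game such that for every player i there exists a Nash equilibrium σ⁽ⁱ⁾ of G in which player i's payoff strictly exceeds his minmax payoff vᵢ, and suppose there exists a feasible and individually rational payoff profile p of G. Then there exists a constant c ∈ ℕ (independent of n) such that for all sufficiently large n, the n-stage repeated game of G has a Nash equilibrium in which, along every on-path history, each player i plays a mixed (non-pure) stage strategy in at most c stages; in particular the effective entropy of player i's equilibrium strategy is at most c·βᵢ, where βᵢ bounds the entropy of player i's strategy in any Nash equilibrium of G. -/

import Mathlib

/-!
The equilibrium follows a plan with two phases. For the first `n - m` stages the players cycle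
deterministically through a periodic sequence of pure profiles whose frequencies are the rational
weights `α`; as `p` is individually rational, every stretch of this phase pays player `i` at least
`v i` per stage, up to an error that does not depend on `n`. In the last `m = |N| L` stages they
cycle through the stage equilibria `σ⁽ʲ⁾`, `L` times each. Whoever leaves the pure path is minmaxed
until the end. A deviation in the last phase does not pay because every stage profile there is a
stage Nash equilibrium; an earlier one gains a bounded amount once and forfeits the bonus
`L Σⱼ (uᵢ(σ⁽ʲ⁾) - vᵢ) > 0` of the last phase, which outweighs that gain for large `L`. On the
path only the last `m` stages are mixed, and each adds at most `βᵢ` to the entropy.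
-/

/-- A mixed strategy over a finite action set. -/
def IsMixed {α : Type} [Fintype α] (σ : α → ℝ) : Prop :=
  (∀ a, 0 ≤ σ a) ∧ ∑ a, σ a = 1

/-- The pure (point-mass) strategy on action `a`. -/
def pureS {α : Type} [DecidableEq α] (a : α) : α → ℝ := fun b => if b = a then 1 else 0

variable {N : Type} [Fintype N] [DecidableEq N] {A : N → Type}
  [∀ i, Fintype (A i)] [∀ i, DecidableEq (A i)] [∀ i, Nonempty (A i)]

/-- Expected utility of a utility function under an independent mixed strategy profile. -/
def expU (u : (∀ i, A i) → ℝ) (σ : ∀ i, A i → ℝ) : ℝ :=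
  ∑ a : ∀ i, A i, (∏ i, σ i (a i)) * u a

/-- Nash equilibrium of the finite strategic game with utilities `u`. -/
def IsNash (u : N → (∀ i, A i) → ℝ) (σ : ∀ i, A i → ℝ) : Prop :=
  (∀ i, IsMixed (σ i)) ∧
  ∀ i (τ : A i → ℝ), IsMixed τ → expU (u i) (Function.update σ i τ) ≤ expU (u i) σ

/-- `vi` is the minmax payoff of player `i`: the least payoff the other players can
force on player `i` (who best-responds with a pure action). -/
def IsMinmaxVal (u : N → (∀ i, A i) → ℝ) (i : N) (vi : ℝ) : Prop :=
  IsLeast {x : ℝ | ∃ σ : ∀ j, A j → ℝ, (∀ j, IsMixed (σ j)) ∧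
    x = Finset.univ.sup' Finset.univ_nonempty
          (fun a : A i => expU (u i) (Function.update σ i (pureS a)))} vi

/-- Probability that, starting from history `h`, the play under behavioral profile `σ`
follows exactly the sequence of action profiles `l`. -/
def histProb (σ : ∀ i, List (∀ j, A j) → A i → ℝ) :
    List (∀ i, A i) → List (∀ i, A i) → ℝ
  | _, [] => 1
  | h, a :: rest => (∏ i, σ i h (a i)) * histProb σ (h ++ [a]) rest

/-- Expected average payoff of player `i` in the `n`-stage repeated game. -/
noncomputable def avgPay (n : ℕ) (u : N → (∀ i, A i) → ℝ) (i : N)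
    (σ : ∀ i, List (∀ j, A j) → A i → ℝ) : ℝ :=
  ∑ f : Fin n → (∀ i, A i), histProb σ [] (List.ofFn f) * ((∑ t, u i (f t)) / n)

/-- Nash equilibrium of the `n`-stage repeated game (behavioral strategies,
average payoffs). -/
def IsRepNash (n : ℕ) (u : N → (∀ i, A i) → ℝ)
    (σ : ∀ i, List (∀ j, A j) → A i → ℝ) : Prop :=
  (∀ i h, IsMixed (σ i h)) ∧
  ∀ i τ, (∀ h, IsMixed (τ h)) →
    avgPay n u i (Function.update σ i τ) ≤ avgPay n u i σ

/-- Shannon entropy (base 2) of a mixed strategy, with the convention 0·log 0 = 0. -/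
noncomputable def ent {α : Type} [Fintype α] (σ : α → ℝ) : ℝ :=
  ∑ a, -(σ a * Real.logb 2 (σ a))

/-- Shannon entropy of a behavioral strategy of player `i` in the `n`-stage repeated
game: the maximum over terminal histories of the summed stage entropies along the
non-terminal prefixes. -/
noncomputable def repEnt (n : ℕ) {i : N} (σi : List (∀ j, A j) → A i → ℝ) : ℝ :=
  Finset.univ.sup' Finset.univ_nonempty
    (fun f : Fin n → (∀ i, A i) => ∑ t : Fin n, ent (σi ((List.ofFn f).take t)))

/-- Effective Shannon entropy of player `i`'s behavioral strategy in profile `σ`: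
the supremum of summed stage entropies along terminal histories of positive
probability under `σ`. -/
noncomputable def effEnt (n : ℕ) (σ : ∀ i, List (∀ j, A j) → A i → ℝ) (i : N) : ℝ :=
  sSup {x : ℝ | ∃ f : Fin n → (∀ i, A i), 0 < histProb σ [] (List.ofFn f) ∧
    x = ∑ t : Fin n, ent (σ i ((List.ofFn f).take t))}

open Finset Function

theorem Function.Periodic.sum_Ico_add_eq_sum_range {M : Type*} [AddCommMonoid M] {f : ℕ → M}
    {K : ℕ} (hf : Periodic f K) (s : ℕ) : ∑ r ∈ Ico s (s + K), f r = ∑ r ∈ range K, f r := by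
  rw [sum_eq_multiset_sum, sum_eq_multiset_sum, range_val, ← Nat.multiset_Ico_map_mod s K,
    Multiset.map_map]
  exact congrArg Multiset.sum (Multiset.map_congr rfl fun r _ => (hf.map_mod_nat r).symm)

theorem Function.Periodic.sum_Ico_add_mul {M : Type*} [AddCommMonoid M] {f : ℕ → M}
    {K : ℕ} (hf : Periodic f K) (s q : ℕ) :
    ∑ r ∈ Ico s (s + K * q), f r = q • ∑ r ∈ range K, f r := by
  induction q with
  | zero => simp
  | succ q ih =>
    rw [mul_add_one, ← add_assoc, ← sum_Ico_consecutive _ (Nat.le_add_right s (K * q))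
      (Nat.le_add_right _ K), ih, hf.sum_Ico_add_eq_sum_range, succ_nsmul]

/-- The complete periods in the window contribute at least `c` per term, and the fewer than `K`
leftover terms lose at most `D` each. -/
theorem Function.Periodic.mul_sub_le_sum_Ico {f : ℕ → ℝ} {K : ℕ} (hf : Periodic f K)
    (hK : 0 < K) {c D : ℝ} (hD : 0 ≤ D) (hperiod : K * c ≤ ∑ r ∈ range K, f r)
    (hf_ge : ∀ r, c - D ≤ f r) (s ℓ : ℕ) : ℓ * c - K * D ≤ ∑ r ∈ Ico s (s + ℓ), f r := by
  have hℓ := Nat.div_add_mod ℓ K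
  set q := ℓ / K
  set ρ := ℓ % K
  have hρ : ρ < K := Nat.mod_lt ℓ hK
  have hfull : (q : ℝ) * (K * c) ≤ ∑ r ∈ Ico s (s + K * q), f r := by
    rw [hf.sum_Ico_add_mul, nsmul_eq_mul]
    exact mul_le_mul_of_nonneg_left hperiod q.cast_nonneg
  have hrest : (ρ : ℝ) * (c - D) ≤ ∑ r ∈ Ico (s + K * q) (s + ℓ), f r := by
    have := card_nsmul_le_sum (Ico (s + K * q) (s + ℓ)) f (c - D) fun r _ => hf_ge r
    rwa [Nat.card_Ico, nsmul_eq_mul, show s + ℓ - (s + K * q) = ρ by omega] at this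
  have hρK : (ρ : ℝ) * D ≤ K * D := mul_le_mul_of_nonneg_right (by exact_mod_cast hρ.le) hD
  have hcast : (ℓ : ℝ) = K * q + ρ := by exact_mod_cast hℓ.symm
  rw [← sum_Ico_consecutive _ (by omega) (by omega : s + K * q ≤ s + ℓ), hcast]
  nlinarith

theorem Finset.sum_mul_le_sum_mul_of_pos {ι : Type*} (s : Finset ι) {w x y : ι → ℝ}
    (hw : ∀ a ∈ s, 0 ≤ w a) (h : ∀ a ∈ s, 0 < w a → x a ≤ y a) :
    ∑ a ∈ s, w a * x a ≤ ∑ a ∈ s, w a * y a := by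
  refine sum_le_sum fun a ha => ?_
  rcases (hw a ha).lt_or_eq with hpos | hzero
  · exact mul_le_mul_of_nonneg_left (h a ha hpos) hpos.le
  · simp [← hzero]

theorem Finset.sum_mul_congr_of_pos {ι : Type*} (s : Finset ι) {w x y : ι → ℝ}
    (hw : ∀ a ∈ s, 0 ≤ w a) (h : ∀ a ∈ s, 0 < w a → x a = y a) :
    ∑ a ∈ s, w a * x a = ∑ a ∈ s, w a * y a :=
  le_antisymm (s.sum_mul_le_sum_mul_of_pos hw fun a ha hp => (h a ha hp).le)
    (s.sum_mul_le_sum_mul_of_pos hw fun a ha hp => (h a ha hp).ge)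

theorem exists_periodic_enum (X : Type*) [Fintype X] [Nonempty X] :
    ∃ w : ℕ → X, Periodic w (Fintype.card X) ∧
      ∀ g : X → ℝ, ∑ r ∈ range (Fintype.card X), g (w r) = ∑ x, g x := by
  refine ⟨fun r => (Fintype.equivFin X).symm ⟨r % Fintype.card X, Nat.mod_lt _ Fintype.card_pos⟩,
    fun r => by simp, fun g => ?_⟩
  rw [← Fin.sum_univ_eq_sum_range (fun r => g ((Fintype.equivFin X).symm ⟨r % _, _⟩)),
    ← (Fintype.equivFin X).symm.sum_comp g]
  exact sum_congr rfl fun r _ => by simp [Nat.mod_eq_of_lt r.isLt]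

theorem exists_nat_eq_mul_of_den_dvd {q : ℚ} (hq : 0 ≤ q) {K : ℕ} (hK : q.den ∣ K) :
    ∃ k : ℕ, (k : ℚ) = K * q := by
  obtain ⟨c, rfl⟩ := hK
  refine ⟨c * q.num.toNat, ?_⟩
  rw [Nat.cast_mul, Nat.cast_mul, mul_comm (q.den : ℚ), mul_assoc, Rat.den_mul_eq_num]
  rw [← Int.toNat_of_nonneg (Rat.num_nonneg.mpr hq)]
  norm_cast

theorem exists_periodic_of_rat_weights {P : Type*} [Fintype P] (α : P → ℚ)
    (hα0 : ∀ a, 0 ≤ α a) (hα1 : ∑ a, α a = 1) :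
    ∃ K > 0, ∃ w : ℕ → P, Periodic w K ∧
      ∀ g : P → ℝ, ∑ r ∈ range K, g (w r) = K * ∑ a, (α a : ℝ) * g a := by
  obtain ⟨K, hKdef⟩ : ∃ K, K = ∏ a, (α a).den := ⟨_, rfl⟩
  have hK : 0 < K := hKdef ▸ prod_pos fun a _ => (α a).den_pos
  choose k hk using fun a => exists_nat_eq_mul_of_den_dvd (hα0 a)
    (hKdef ▸ dvd_prod_of_mem (fun a => (α a).den) (mem_univ a))
  -- enumerate periodically `k a = K * α a` copies of each `a`
  have hcard : Fintype.card (Σ a, Fin (k a)) = K := by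
    rw [Fintype.card_sigma]
    simp only [Fintype.card_fin]
    exact_mod_cast (by push_cast [hk]; rw [← mul_sum, hα1, mul_one] : ((∑ a, k a : ℕ) : ℚ) = K)
  have : Nonempty (Σ a, Fin (k a)) := Fintype.card_pos_iff.mp (hcard ▸ hK)
  obtain ⟨w, hw, hsum⟩ := exists_periodic_enum (Σ a, Fin (k a))
  rw [hcard] at hw hsum
  refine ⟨K, hK, fun r => (w r).1, hw.comp Sigma.fst, fun g => ?_⟩
  have hkR : ∀ a, (k a : ℝ) = K * α a := fun a => by exact_mod_cast hk a
  rw [hsum (fun x => g x.1), Fintype.sum_sigma, mul_sum]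
  simp [hkR, mul_assoc]

theorem exists_nat_forall_le_mul {ι : Type*} [Finite ι] (C : ι → ℝ) {g : ι → ℝ}
    (hg : ∀ i, 0 < g i) : ∃ L : ℕ, ∀ i, C i ≤ L * g i :=
  (Filter.eventually_all.2 fun i => (tendsto_natCast_atTop_atTop.atTop_mul_const
    (hg i)).eventually_ge_atTop (C i)).exists

theorem IsMixed.le_one {α : Type} [Fintype α] {σ : α → ℝ} (hσ : IsMixed σ) (a : α) : σ a ≤ 1 :=
  hσ.2 ▸ single_le_sum (fun b _ => hσ.1 b) (mem_univ a)

theorem IsMixed.ent_nonneg {α : Type} [Fintype α] {σ : α → ℝ} (hσ : IsMixed σ) : 0 ≤ ent σ :=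
  sum_nonneg fun a _ => neg_nonneg.mpr <| mul_nonpos_of_nonneg_of_nonpos (hσ.1 a)
    (Real.logb_nonpos one_lt_two (hσ.1 a) (hσ.le_one a))

theorem pureS_isMixed {α : Type} [Fintype α] [DecidableEq α] (a : α) : IsMixed (pureS a) :=
  ⟨fun b => by unfold pureS; split_ifs <;> norm_num, by simp [pureS]⟩

theorem ent_pureS {α : Type} [Fintype α] [DecidableEq α] (a : α) : ent (pureS a) = 0 :=
  sum_eq_zero fun b _ => by by_cases h : b = a <;> simp [pureS, h]

theorem sum_mul_pureS {α : Type} [Fintype α] [DecidableEq α] (ρ : α → ℝ) (a : α) :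
    ∑ b, ρ b * pureS b a = ρ a := by
  simp [pureS]

section StageGame

variable {N : Type} [Fintype N] [DecidableEq N] {A : N → Type} [∀ i, Fintype (A i)]

theorem sum_prod_eq_one {σ : ∀ i, A i → ℝ} (hσ : ∀ i, IsMixed (σ i)) :
    ∑ a : ∀ i, A i, ∏ i, σ i (a i) = 1 := by
  rw [← Fintype.piFinset_univ, ← prod_univ_sum]
  exact prod_eq_one fun i _ => (hσ i).2

theorem expU_le {σ : ∀ i, A i → ℝ} (hσ : ∀ i, IsMixed (σ i)) {g : (∀ i, A i) → ℝ} {M : ℝ}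
    (hg : ∀ a, g a ≤ M) : expU g σ ≤ M := by
  calc expU g σ ≤ ∑ a : ∀ i, A i, (∏ i, σ i (a i)) * M :=
        sum_le_sum fun a _ => mul_le_mul_of_nonneg_left (hg a) (prod_nonneg fun i _ => (hσ i).1 _)
    _ = M := by rw [← sum_mul, sum_prod_eq_one hσ, one_mul]

theorem expU_pureS [∀ i, DecidableEq (A i)] (g : (∀ i, A i) → ℝ) (y : ∀ i, A i) :
    expU g (fun i => pureS (y i)) = g y := by
  unfold expU
  rw [sum_eq_single y (fun a _ hay => ?_) (by simp)]
  · simp [pureS]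
  · obtain ⟨i, hi⟩ := Function.ne_iff.mp hay
    rw [prod_eq_zero (mem_univ i) (by simp [pureS, hi]), zero_mul]

theorem expU_update [∀ i, DecidableEq (A i)] (g : (∀ i, A i) → ℝ) (σ : ∀ i, A i → ℝ) (i : N)
    (ρ : A i → ℝ) :
    expU g (Function.update σ i ρ) = ∑ b, ρ b * expU g (Function.update σ i (pureS b)) := by
  have hprod : ∀ (τ : A i → ℝ) (a : ∀ i, A i), ∏ j, Function.update σ i τ j (a j)
      = τ (a i) * ∏ j ∈ univ \ {i}, σ j (a j) := fun τ a => by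
    simp_rw [Function.apply_update (fun j (s : A j → ℝ) => s (a j))]
    exact prod_update_of_mem (mem_univ i) _ _
  simp only [expU, mul_sum, hprod]
  rw [sum_comm]
  refine sum_congr rfl fun a _ => ?_
  rw [← sum_mul_pureS ρ (a i), sum_mul, sum_mul]
  exact sum_congr rfl fun b _ => by ring

end StageGame

section StageGameValues

variable {N : Type} [Fintype N] [DecidableEq N] {A : N → Type} [∀ i, Fintype (A i)]
  [∀ i, DecidableEq (A i)] [∀ i, Nonempty (A i)] {u : N → (∀ i, A i) → ℝ} {i : N} {vi : ℝ}

theorem IsMinmaxVal.exists_punishment (hv : IsMinmaxVal u i vi) :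
    ∃ π : ∀ j, A j → ℝ, (∀ j, IsMixed (π j)) ∧
      ∀ ρ, IsMixed ρ → expU (u i) (Function.update π i ρ) ≤ vi := by
  obtain ⟨π, hπ, rfl⟩ := hv.1
  refine ⟨π, hπ, fun ρ hρ => ?_⟩
  rw [expU_update]
  calc ∑ b, ρ b * expU (u i) (Function.update π i (pureS b))
      ≤ ∑ b, ρ b * univ.sup' univ_nonempty
          (fun a : A i => expU (u i) (Function.update π i (pureS a))) :=
        sum_le_sum fun b _ => mul_le_mul_of_nonneg_left
          (le_sup' (fun a : A i => expU (u i) (Function.update π i (pureS a))) (mem_univ b))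
          (hρ.1 b)
    _ = _ := by rw [← sum_mul, hρ.2, one_mul]

theorem IsMinmaxVal.le_of_isNash (hv : IsMinmaxVal u i vi) {σ : ∀ j, A j → ℝ}
    (hσ : IsNash u σ) : vi ≤ expU (u i) σ :=
  (hv.2 ⟨σ, hσ.1, rfl⟩).trans (sup'_le _ _ fun a _ => hσ.2 i _ (pureS_isMixed a))

end StageGameValues

theorem Fintype.sum_pi_fin_succ {P M : Type*} [Fintype P] [AddCommMonoid M] (n : ℕ)
    (F : (Fin (n + 1) → P) → M) : ∑ f, F f = ∑ a, ∑ f : Fin n → P, F (Fin.cons a f) := by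
  rw [← (Fin.consEquiv fun _ => P).sum_comp, Fintype.sum_prod_type]
  rfl

theorem Function.update_eval {ι X : Type*} [DecidableEq ι] {B : ι → Type*} (σ : ∀ i, X → B i)
    (i : ι) (τ : X → B i) (x : X) :
    (fun j => Function.update σ i τ j x) = Function.update (fun j => σ j x) i (τ x) :=
  funext fun j => Function.apply_update (fun j (s : X → B j) => s x) σ i τ j

theorem update_isMixed {N : Type} [DecidableEq N] {A : N → Type} [∀ i, Fintype (A i)] {X : Type}
    {σ : ∀ i, X → A i → ℝ} (hσ : ∀ i h, IsMixed (σ i h)) {i : N} {τ : X → A i → ℝ}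
    (hτ : ∀ h, IsMixed (τ h)) (j : N) (h : X) : IsMixed (Function.update σ i τ j h) := by
  rcases eq_or_ne j i with rfl | hj
  · simpa using hτ h
  · simpa [hj] using hσ j h

section RepeatedGame

variable {N : Type} [Fintype N] {A : N → Type} [∀ i, Fintype (A i)]
  {σ : ∀ i, List (∀ j, A j) → A i → ℝ}

theorem histProb_nonneg (hσ : ∀ i h, IsMixed (σ i h)) :
    ∀ (l h : List (∀ i, A i)), 0 ≤ histProb σ h l
  | [], _ => zero_le_one
  | a :: l, h => mul_nonneg (prod_nonneg fun j _ => (hσ j h).1 (a j)) (histProb_nonneg hσ l _)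

theorem histProb_pos_invariant (hσ : ∀ i h, IsMixed (σ i h)) (S : List (∀ i, A i) → Prop)
    (hS : ∀ h a, S h → 0 < ∏ j, σ j h (a j) → S (h ++ [a])) :
    ∀ (l h : List (∀ i, A i)), S h → 0 < histProb σ h l → ∀ t, S (h ++ l.take t)
  | [], h, hh, _, t => by simpa using hh
  | a :: l, h, hh, hpos, 0 => by simpa using hh
  | a :: l, h, hh, hpos, t + 1 => by
    have hw : 0 ≤ ∏ j, σ j h (a j) := prod_nonneg fun j _ => (hσ j h).1 (a j)
    have hrest := pos_of_mul_pos_right hpos hw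
    simpa using histProb_pos_invariant hσ S hS l (h ++ [a])
      (hS h a hh (pos_of_mul_pos_left hpos (histProb_nonneg hσ l _))) hrest t

variable [DecidableEq N]

noncomputable def totalPay (σ : ∀ i, List (∀ j, A j) → A i → ℝ) (g : (∀ i, A i) → ℝ) :
    ℕ → List (∀ i, A i) → ℝ
  | 0, _ => 0
  | k + 1, h => ∑ a : ∀ i, A i, (∏ j, σ j h (a j)) * (g a + totalPay σ g k (h ++ [a]))

theorem sum_histProb (hσ : ∀ i h, IsMixed (σ i h)) :
    ∀ (k : ℕ) (h : List (∀ i, A i)), ∑ f : Fin k → (∀ i, A i), histProb σ h (List.ofFn f) = 1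
  | 0, _ => by simp [histProb]
  | k + 1, h => by
    simp only [Fintype.sum_pi_fin_succ, List.ofFn_cons, histProb, ← mul_sum, sum_histProb hσ k,
      mul_one]
    exact sum_prod_eq_one fun j => hσ j h

theorem sum_histProb_mul_sum (hσ : ∀ i h, IsMixed (σ i h)) (g : (∀ i, A i) → ℝ) :
    ∀ (k : ℕ) (h : List (∀ i, A i)),
      ∑ f : Fin k → (∀ i, A i), histProb σ h (List.ofFn f) * ∑ t, g (f t) = totalPay σ g k h
  | 0, _ => by simp [totalPay]
  | k + 1, h => by
    simp only [Fintype.sum_pi_fin_succ, List.ofFn_cons, histProb, Fin.sum_univ_succ, Fin.cons_zero,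
      Fin.cons_succ, totalPay, ← sum_histProb_mul_sum hσ g k, mul_add, sum_add_distrib, ← sum_mul,
      sum_histProb hσ k, mul_assoc, ← mul_sum]
    simp

theorem avgPay_eq_totalPay (hσ : ∀ i h, IsMixed (σ i h)) (n : ℕ) (u : N → (∀ i, A i) → ℝ)
    (i : N) : avgPay n u i σ = totalPay σ (u i) n [] / n := by
  rw [avgPay, ← sum_histProb_mul_sum hσ, sum_div]
  simp only [mul_div_assoc]

theorem totalPay_succ_le {g : (∀ i, A i) → ℝ} {k : ℕ} {h : List (∀ i, A i)} {B : ℝ}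
    (hσ : ∀ j, IsMixed (σ j h))
    (hB : ∀ a, 0 < ∏ j, σ j h (a j) → g a + totalPay σ g k (h ++ [a]) ≤ B) :
    totalPay σ g (k + 1) h ≤ B :=
  calc totalPay σ g (k + 1) h
        = ∑ a : ∀ i, A i, (∏ j, σ j h (a j)) * (g a + totalPay σ g k (h ++ [a])) := rfl
    _ ≤ ∑ a : ∀ i, A i, (∏ j, σ j h (a j)) * B :=
        sum_mul_le_sum_mul_of_pos _ (fun a _ => prod_nonneg fun j _ => (hσ j).1 _)
          fun a _ => hB a
    _ = B := by rw [← sum_mul, sum_prod_eq_one hσ, one_mul]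

theorem totalPay_succ (g : (∀ i, A i) → ℝ) (k : ℕ) (h : List (∀ i, A i)) :
    totalPay σ g (k + 1) h = expU g (fun j => σ j h)
      + ∑ a : ∀ i, A i, (∏ j, σ j h (a j)) * totalPay σ g k (h ++ [a]) := by
  simp only [totalPay, expU, mul_add, sum_add_distrib]

theorem totalPay_le_of_invariant (hσ : ∀ i h, IsMixed (σ i h)) (S : List (∀ i, A i) → Prop)
    (hS : ∀ h a, S h → 0 < ∏ j, σ j h (a j) → S (h ++ [a])) {g : (∀ i, A i) → ℝ} {E : ℕ → ℝ}
    (hE : ∀ h, S h → expU g (fun j => σ j h) ≤ E h.length) :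
    ∀ (k : ℕ) (h : List (∀ i, A i)), S h →
      totalPay σ g k h ≤ ∑ t ∈ Ico h.length (h.length + k), E t := by
  intro k
  induction k with
  | zero => simp [totalPay]
  | succ k ih =>
    intro h hh
    set C := ∑ t ∈ Ico (h.length + 1) (h.length + 1 + k), E t
    have hcont := sum_mul_le_sum_mul_of_pos (univ : Finset (∀ i, A i)) (y := fun _ => C)
      (fun a _ => prod_nonneg fun j _ => (hσ j h).1 (a j))
      fun a _ ha => by simpa using ih (h ++ [a]) (hS h a hh ha)
    rw [← sum_mul, sum_prod_eq_one (hσ · h), one_mul] at hcont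
    rw [totalPay_succ, sum_eq_sum_Ico_succ_bot (by omega),
      show h.length + (k + 1) = h.length + 1 + k by ring]
    exact add_le_add (hE h hh) hcont

theorem totalPay_eq_of_invariant (hσ : ∀ i h, IsMixed (σ i h)) (S : List (∀ i, A i) → Prop)
    (hS : ∀ h a, S h → 0 < ∏ j, σ j h (a j) → S (h ++ [a])) {g : (∀ i, A i) → ℝ} {E : ℕ → ℝ}
    (hE : ∀ h, S h → expU g (fun j => σ j h) = E h.length) :
    ∀ (k : ℕ) (h : List (∀ i, A i)), S h →
      totalPay σ g k h = ∑ t ∈ Ico h.length (h.length + k), E t := by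
  intro k
  induction k with
  | zero => simp [totalPay]
  | succ k ih =>
    intro h hh
    set C := ∑ t ∈ Ico (h.length + 1) (h.length + 1 + k), E t
    have hcont := sum_mul_congr_of_pos (univ : Finset (∀ i, A i)) (y := fun _ => C)
      (fun a _ => prod_nonneg fun j _ => (hσ j h).1 (a j))
      fun a _ ha => by simpa using ih (h ++ [a]) (hS h a hh ha)
    rw [← sum_mul, sum_prod_eq_one (hσ · h), one_mul] at hcont
    rw [totalPay_succ, sum_eq_sum_Ico_succ_bot (by omega),
      show h.length + (k + 1) = h.length + 1 + k by ring, hE h hh, hcont]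

end RepeatedGame

section Trigger

variable {N : Type} {A : N → Type}

theorem eq_of_pos_prod_pureS [Fintype N] [∀ i, DecidableEq (A i)] {σ : ∀ i, A i → ℝ}
    {y a : ∀ i, A i} {j : N} (hj : σ j = pureS (y j)) (hpos : 0 < ∏ k, σ k (a k)) : a j = y j := by
  by_contra hne
  exact hpos.ne' (prod_eq_zero (mem_univ j) (by simp [hj, pureS, hne]))

open Classical in
noncomputable def deviator (x y : ∀ i, A i) : Option N :=
  if h : ∃ j, x j ≠ y j then some h.choose else none

theorem deviator_self (y : ∀ i, A i) : deviator y y = none := by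
  simp [deviator]

theorem deviator_eq_some {x y : ∀ i, A i} {i : N} (hother : ∀ j, j ≠ i → x j = y j)
    (hi : x i ≠ y i) : deviator x y = some i := by
  have hex : ∃ j, x j ≠ y j := ⟨i, hi⟩
  rw [deviator, dif_pos hex, Option.some_inj]
  by_contra hne
  exact hex.choose_spec (hother _ hne)

/-- The first player to leave `path` during the first `plen` stages of the history. -/
noncomputable def firstDeviator (path : ℕ → ∀ i, A i) (plen : ℕ) (h : List (∀ i, A i)) :
    Option N :=
  h.zipIdx.foldl (fun d x => d.or (if x.2 < plen then deviator x.1 (path x.2) else none)) none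

variable {path : ℕ → ∀ i, A i} {plen : ℕ}

theorem firstDeviator_append_singleton (h : List (∀ i, A i)) (a : ∀ i, A i) :
    firstDeviator path plen (h ++ [a]) = (firstDeviator path plen h).or
      (if h.length < plen then deviator a (path h.length) else none) := by
  simp [firstDeviator, List.zipIdx_append]

theorem firstDeviator_append_of_eq_some {h : List (∀ i, A i)} {d : N}
    (hd : firstDeviator path plen h = some d) (a : ∀ i, A i) :
    firstDeviator path plen (h ++ [a]) = some d := by
  simp [firstDeviator_append_singleton, hd]

theorem firstDeviator_append_of_le {h : List (∀ i, A i)}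
    (hh : firstDeviator path plen h = none) (hlen : plen ≤ h.length) (a : ∀ i, A i) :
    firstDeviator path plen (h ++ [a]) = none := by
  simp [firstDeviator_append_singleton, hh, Nat.not_lt.mpr hlen]

theorem firstDeviator_append_path {h : List (∀ i, A i)}
    (hh : firstDeviator path plen h = none) :
    firstDeviator path plen (h ++ [path h.length]) = none := by
  simp [firstDeviator_append_singleton, hh, deviator_self]

variable [∀ i, DecidableEq (A i)]

noncomputable def plan (path : ℕ → ∀ i, A i) (plen : ℕ) (nash : ℕ → ∀ i, A i → ℝ) (t : ℕ) :
    ∀ i, A i → ℝ :=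
  if t < plen then fun i => pureS (path t i) else nash t

noncomputable def trigger (path : ℕ → ∀ i, A i) (plen : ℕ) (nash : ℕ → ∀ i, A i → ℝ)
    (pun : N → ∀ i, A i → ℝ) : ∀ i, List (∀ j, A j) → A i → ℝ :=
  fun i h =>
    match firstDeviator path plen h with
    | some d => pun d i
    | none => plan path plen nash h.length i

variable {nash : ℕ → ∀ i, A i → ℝ} {pun : N → ∀ i, A i → ℝ}

theorem trigger_of_eq_none {h : List (∀ i, A i)} (hh : firstDeviator path plen h = none) (i : N) :
    trigger path plen nash pun i h = plan path plen nash h.length i := by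
  simp [trigger, hh]

theorem trigger_of_eq_some {h : List (∀ i, A i)} {d : N}
    (hh : firstDeviator path plen h = some d) (i : N) :
    trigger path plen nash pun i h = pun d i := by
  simp [trigger, hh]

theorem firstDeviator_trigger_append [Fintype N] (h : List (∀ i, A i))
    (hh : firstDeviator path plen h = none) (a : ∀ i, A i)
    (hpos : 0 < ∏ j, trigger path plen nash pun j h (a j)) :
    firstDeviator path plen (h ++ [a]) = none := by
  by_cases hlen : h.length < plen
  · have : a = path h.length := funext fun j => eq_of_pos_prod_pureS
      (by rw [trigger_of_eq_none hh, plan, if_pos hlen]) hpos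
    exact this ▸ firstDeviator_append_path hh
  · exact firstDeviator_append_of_le hh (Nat.not_lt.mp hlen) a

variable [∀ i, Fintype (A i)]

theorem plan_isMixed (hnash : ∀ t i, IsMixed (nash t i)) (t : ℕ) (i : N) :
    IsMixed (plan path plen nash t i) := by
  unfold plan
  split_ifs
  exacts [pureS_isMixed _, hnash t i]

theorem trigger_isMixed (hnash : ∀ t i, IsMixed (nash t i)) (hpun : ∀ d i, IsMixed (pun d i))
    (i : N) (h : List (∀ j, A j)) : IsMixed (trigger path plen nash pun i h) := by
  unfold trigger
  split
  exacts [hpun _ i, plan_isMixed hnash _ i]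

theorem trigger_take_of_histProb_pos [Fintype N] (hnash : ∀ t i, IsMixed (nash t i))
    (hpun : ∀ d i, IsMixed (pun d i)) {n : ℕ} {f : Fin n → ∀ i, A i}
    (hf : 0 < histProb (trigger path plen nash pun) [] (List.ofFn f)) (i : N) (t : Fin n) :
    trigger path plen nash pun i ((List.ofFn f).take t) = plan path plen nash t i := by
  have := histProb_pos_invariant (trigger_isMixed hnash hpun) (firstDeviator path plen · = none)
    (fun h a hh ha => firstDeviator_trigger_append h hh a ha) _ [] rfl hf t
  rw [List.nil_append] at this
  rw [trigger_of_eq_none this]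
  simp [t.isLt.le]

theorem ncard_not_pure_trigger_le [Fintype N] (hnash : ∀ t i, IsMixed (nash t i))
    (hpun : ∀ d i, IsMixed (pun d i)) {n : ℕ} {f : Fin n → ∀ i, A i}
    (hf : 0 < histProb (trigger path plen nash pun) [] (List.ofFn f)) (i : N) :
    {t : Fin n | ¬ ∃ a : A i, trigger path plen nash pun i ((List.ofFn f).take t) = pureS a}.ncard
      ≤ n - plen := by
  calc _ ≤ (↑(Ico plen n) : Set ℕ).ncard :=
        Set.ncard_le_ncard_of_injOn Fin.val (fun t ht => ?_) Fin.val_injective.injOn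
          (Set.toFinite _)
    _ = n - plen := by rw [Set.ncard_coe_finset, Nat.card_Ico]
  rw [Set.mem_ofPred_eq, trigger_take_of_histProb_pos hnash hpun hf, plan] at ht
  rw [coe_Ico, Set.mem_Ico]
  refine ⟨not_lt.mp fun hlt => ht ⟨path t i, by rw [if_pos hlt]⟩, t.isLt⟩

theorem sum_ent_trigger_le [Fintype N] (hnash : ∀ t i, IsMixed (nash t i))
    (hpun : ∀ d i, IsMixed (pun d i)) {n : ℕ} (hplen : plen ≤ n) {f : Fin n → ∀ i, A i}
    (hf : 0 < histProb (trigger path plen nash pun) [] (List.ofFn f)) (i : N) {b : ℝ}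
    (hb : ∀ t, ent (nash t i) ≤ b) :
    ∑ t : Fin n, ent (trigger path plen nash pun i ((List.ofFn f).take t))
      ≤ (n - plen : ℕ) * b := by
  simp_rw [trigger_take_of_histProb_pos hnash hpun hf i]
  rw [Fin.sum_univ_eq_sum_range (fun t => ent (plan path plen nash t i)),
    ← sum_range_add_sum_Ico _ hplen, sum_eq_zero fun t ht => ?_, zero_add]
  · rw [← Nat.card_Ico, ← nsmul_eq_mul]
    exact sum_le_card_nsmul _ _ _ fun t ht => by
      rw [plan, if_neg (not_lt.mpr (mem_Ico.mp ht).1)]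
      exact hb t
  · rw [plan, if_pos (mem_range.mp ht), ent_pureS]

end Trigger

section TriggerEquilibrium

variable {N : Type} [Fintype N] [DecidableEq N] {A : N → Type} [∀ i, Fintype (A i)]
  [∀ i, DecidableEq (A i)] {path : ℕ → ∀ i, A i} {plen : ℕ} {nash : ℕ → ∀ i, A i → ℝ}
  {pun : N → ∀ i, A i → ℝ}

theorem totalPay_trigger (hnash : ∀ t i, IsMixed (nash t i)) (hpun : ∀ d i, IsMixed (pun d i))
    (g : (∀ i, A i) → ℝ) (n : ℕ) :
    totalPay (trigger path plen nash pun) g n [] = ∑ t ∈ range n, expU g (plan path plen nash t) :=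
  calc _ = ∑ t ∈ Ico 0 (0 + n), expU g (plan path plen nash t) :=
        totalPay_eq_of_invariant (trigger_isMixed hnash hpun) (firstDeviator path plen · = none)
          (fun h a hh ha => firstDeviator_trigger_append h hh a ha)
          (fun h hh => by simp only [trigger_of_eq_none hh]) n [] rfl
    _ = _ := by rw [zero_add, range_eq_Ico]

variable {u : N → (∀ i, A i) → ℝ} {v : N → ℝ} {i : N} {τ : List (∀ j, A j) → A i → ℝ}

theorem totalPay_update_trigger_le_of_punished (hnash : ∀ t i, IsMixed (nash t i))
    (hpun_mixed : ∀ d i, IsMixed (pun d i))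
    (hpun : ∀ ρ, IsMixed ρ → expU (u i) (Function.update (pun i) i ρ) ≤ v i)
    (hτ : ∀ h, IsMixed (τ h)) (k : ℕ) (h : List (∀ j, A j))
    (hh : firstDeviator path plen h = some i) :
    totalPay (Function.update (trigger path plen nash pun) i τ) (u i) k h ≤ k * v i :=
  calc _ ≤ ∑ t ∈ Ico h.length (h.length + k), v i :=
        totalPay_le_of_invariant (update_isMixed (trigger_isMixed hnash hpun_mixed) hτ)
          (firstDeviator path plen · = some i)
          (fun h a hh _ => firstDeviator_append_of_eq_some hh a)
          (fun h hh => by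
            rw [Function.update_eval]
            simp only [trigger_of_eq_some hh]
            exact hpun _ (hτ h)) k h hh
    _ = k * v i := by simp

theorem totalPay_update_trigger_le_of_le_length (hnash : ∀ t, IsNash u (nash t))
    (hpun_mixed : ∀ d i, IsMixed (pun d i)) (hτ : ∀ h, IsMixed (τ h)) (k : ℕ)
    (h : List (∀ j, A j)) (hh : firstDeviator path plen h = none) (hlen : plen ≤ h.length) :
    totalPay (Function.update (trigger path plen nash pun) i τ) (u i) k h
      ≤ ∑ t ∈ Ico h.length (h.length + k), expU (u i) (plan path plen nash t) :=
  totalPay_le_of_invariant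
    (update_isMixed (trigger_isMixed (fun t => (hnash t).1) hpun_mixed) hτ)
    (fun h => firstDeviator path plen h = none ∧ plen ≤ h.length)
    (fun h a hh _ => ⟨firstDeviator_append_of_le hh.1 hh.2 a, by simp; omega⟩)
    (fun h hh => by
      rw [Function.update_eval]
      simp only [trigger_of_eq_none hh.1, plan, if_neg (Nat.not_lt.mpr hh.2)]
      exact (hnash _).2 i _ (hτ h)) k h ⟨hh, hlen⟩

/-- A deviation before stage `plen` gains at most `M` once and is minmaxed from then on;
`hdeter` says that this does not pay. -/
theorem totalPay_update_trigger_le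
    (hnash : ∀ t, IsNash u (nash t)) (hpun_mixed : ∀ d i, IsMixed (pun d i))
    (hpun : ∀ ρ, IsMixed ρ → expU (u i) (Function.update (pun i) i ρ) ≤ v i)
    (hτ : ∀ h, IsMixed (τ h)) {M : ℝ} (hM : ∀ a, u i a ≤ M) {n : ℕ}
    (hdeter : ∀ s k, s < plen → s + (k + 1) = n →
      M + k * v i ≤ ∑ t ∈ Ico s n, expU (u i) (plan path plen nash t)) :
    ∀ (k : ℕ) (h : List (∀ j, A j)), firstDeviator path plen h = none → h.length + k = n →
      totalPay (Function.update (trigger path plen nash pun) i τ) (u i) k h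
        ≤ ∑ t ∈ Ico h.length n, expU (u i) (plan path plen nash t) := by
  have hσ := trigger_isMixed (path := path) (plen := plen) (fun t => (hnash t).1) hpun_mixed
  intro k
  induction k with
  | zero => intro h _ hn; simp [totalPay, ← hn]
  | succ k ih =>
    intro h hh hn
    by_cases hlen : plen ≤ h.length
    · exact hn ▸ totalPay_update_trigger_le_of_le_length hnash hpun_mixed hτ (k + 1) h hh hlen
    rw [not_le] at hlen
    have hpure : ∀ j, j ≠ i →
        Function.update (trigger path plen nash pun) i τ j h = pureS (path h.length j) :=
      fun j hj => by rw [Function.update_of_ne hj, trigger_of_eq_none hh, plan, if_pos hlen]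
    refine totalPay_succ_le (update_isMixed hσ hτ · h) fun a ha => ?_
    have hother : ∀ j, j ≠ i → a j = path h.length j :=
      fun j hj => eq_of_pos_prod_pureS (hpure j hj) ha
    by_cases hai : a i = path h.length i
    · obtain rfl : a = path h.length :=
        funext fun j => (eq_or_ne j i).elim (· ▸ hai) (hother j)
      have hcont := ih _ (firstDeviator_append_path hh) (by simp; omega)
      rw [List.length_append, List.length_singleton] at hcont
      rw [sum_eq_sum_Ico_succ_bot (by omega), plan, if_pos hlen, expU_pureS]
      linarith
    · have hdev : firstDeviator path plen (h ++ [a]) = some i := by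
        rw [firstDeviator_append_singleton, hh, if_pos hlen, deviator_eq_some hother hai]
        rfl
      have hpunish := totalPay_update_trigger_le_of_punished (fun t => (hnash t).1) hpun_mixed
        hpun hτ k _ hdev
      linarith [hM a, hdeter h.length k hlen (by omega)]

theorem trigger_isRepNash {n : ℕ} (hnash : ∀ t, IsNash u (nash t))
    (hpun_mixed : ∀ d i, IsMixed (pun d i))
    (hpun : ∀ i ρ, IsMixed ρ → expU (u i) (Function.update (pun i) i ρ) ≤ v i) {M : ℝ}
    (hM : ∀ i a, u i a ≤ M)
    (hdeter : ∀ i s k, s < plen → s + (k + 1) = n →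
      M + k * v i ≤ ∑ t ∈ Ico s n, expU (u i) (plan path plen nash t)) :
    IsRepNash n u (trigger path plen nash pun) := by
  have hσ := trigger_isMixed (path := path) (plen := plen) (fun t => (hnash t).1) hpun_mixed
  refine ⟨hσ, fun i τ hτ => ?_⟩
  rw [avgPay_eq_totalPay (update_isMixed hσ hτ), avgPay_eq_totalPay hσ,
    totalPay_trigger (fun t => (hnash t).1) hpun_mixed, range_eq_Ico]
  gcongr
  exact totalPay_update_trigger_le hnash hpun_mixed (hpun i) hτ (hM i) (hdeter i) n [] rfl
    (zero_add n)

theorem le_sum_plan_of_periodic {g : (∀ i, A i) → ℝ} {c M : ℝ} {K Nc L : ℕ}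
    (hpath : Periodic path K) (hK : 0 < K)
    (hpath_sum : K * c ≤ ∑ r ∈ range K, g (path r)) (hM : ∀ a, |g a| ≤ M)
    (hnash : Periodic nash Nc)
    (hL : M - c + K * (2 * M) ≤ L * ∑ r ∈ range Nc, (expU g (nash r) - c)) {s k : ℕ}
    (hs : s < plen) (hk : s + (k + 1) = plen + Nc * L) :
    M + k * c ≤ ∑ t ∈ Ico s (plen + Nc * L), expU g (plan path plen nash t) := by
  have hcM : c ≤ M := by
    have := hpath_sum.trans (sum_le_card_nsmul _ _ M fun r _ => (le_abs_self _).trans (hM _))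
    rw [card_range, nsmul_eq_mul] at this
    exact le_of_mul_le_mul_left this (by exact_mod_cast hK)
  have hwindow := (hpath.comp g).mul_sub_le_sum_Ico hK (D := 2 * M)
    (by linarith [(abs_nonneg _).trans (hM (path 0))]) hpath_sum
    (fun r => by simp only [Function.comp_apply]; linarith [(abs_le.mp (hM (path r))).1])
    s (plen - s)
  simp only [Function.comp_apply, Nat.add_sub_cancel' hs.le] at hwindow
  have hpure : ∑ t ∈ Ico s plen, expU g (plan path plen nash t) = ∑ t ∈ Ico s plen, g (path t) :=
    sum_congr rfl fun t ht => by rw [plan, if_pos (mem_Ico.mp ht).2, expU_pureS]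
  have hmix : ∑ t ∈ Ico plen (plen + Nc * L), (expU g (plan path plen nash t) - c)
      = L * ∑ r ∈ range Nc, (expU g (nash r) - c) := by
    have hper : Periodic (fun t => expU g (nash t) - c) Nc :=
      fun t => congrArg (fun σ => expU g σ - c) (hnash t)
    rw [← nsmul_eq_mul, ← hper.sum_Ico_add_mul plen L]
    exact sum_congr rfl fun t ht => by rw [plan, if_neg (not_lt.mpr (mem_Ico.mp ht).1)]
  rw [sum_sub_distrib, sum_const, Nat.card_Ico, Nat.add_sub_cancel_left, nsmul_eq_mul] at hmix
  push_cast at hmix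
  have hk' : (k : ℝ) + 1 = (plen - s : ℕ) + Nc * L := by
    exact_mod_cast (by omega : k + 1 = plen - s + Nc * L)
  have hkc : (k : ℝ) * c = (plen - s : ℕ) * c + Nc * L * c - c := by linear_combination c * hk'
  rw [← sum_Ico_consecutive _ hs.le (Nat.le_add_right plen _), hpure]
  linarith

theorem trigger_isRepNash_of_periodic {M : ℝ} {K Nc L n : ℕ} (hn : Nc * L ≤ n) (hK : 0 < K)
    (hpath : Periodic path K) (hpath_sum : ∀ i, K * v i ≤ ∑ r ∈ range K, u i (path r))
    (hM : ∀ i a, |u i a| ≤ M) (hnash : ∀ t, IsNash u (nash t))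
    (hnash_per : Periodic nash Nc)
    (hL : ∀ i, M - v i + K * (2 * M) ≤ L * ∑ r ∈ range Nc, (expU (u i) (nash r) - v i))
    (hpun_mixed : ∀ d i, IsMixed (pun d i))
    (hpun : ∀ i ρ, IsMixed ρ → expU (u i) (Function.update (pun i) i ρ) ≤ v i) :
    IsRepNash n u (trigger path (n - Nc * L) nash pun) :=
  trigger_isRepNash hnash hpun_mixed hpun (fun i a => (abs_le.1 (hM i a)).2) fun i s k hs hk => by
    simpa [Nat.sub_add_cancel hn] using
      le_sum_plan_of_periodic hpath hK (hpath_sum i) (hM i) hnash_per (hL i) hs (by omega)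

end TriggerEquilibrium

theorem stmt_17 (u : N → (∀ i, A i) → ℝ) (v : N → ℝ)
    (hv : ∀ i, IsMinmaxVal u i (v i))
    -- for every player there is a stage Nash equilibrium strictly above his minmax payoff
    (hNE : ∀ i, ∃ σ, IsNash u σ ∧ v i < expU (u i) σ)
    -- a feasible and individually rational payoff profile p
    (p : N → ℝ) (α : (∀ i, A i) → ℚ)
    (hα0 : ∀ a, 0 ≤ α a) (hα1 : ∑ a, α a = 1)
    (hfeas : ∀ i, p i = ∑ a, (α a : ℝ) * u i a)
    (hIR : ∀ i, v i ≤ p i)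
    -- βᵢ bounds the entropy of player i's strategy in any stage Nash equilibrium
    (β : N → ℝ) (hβ : ∀ i σ, IsNash u σ → ent (σ i) ≤ β i) :
    ∃ c : ℕ, ∃ n₀ : ℕ, ∀ n, n₀ ≤ n →
      ∃ σ : ∀ i, List (∀ j, A j) → A i → ℝ, IsRepNash n u σ ∧
        -- along every on-path terminal history, each player mixes in at most c stages
        (∀ i, ∀ f : Fin n → (∀ i, A i), 0 < histProb σ [] (List.ofFn f) →
          {t : Fin n | ¬ ∃ a : A i, σ i ((List.ofFn f).take t) = pureS a}.ncard ≤ c) ∧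
        -- in particular the effective entropy of player i's strategy is at most c·βᵢ
        (∀ i, effEnt n σ i ≤ (c : ℝ) * β i) := by
  rcases isEmpty_or_nonempty N with hN | hN
  · exact ⟨0, 0, fun n _ => ⟨isEmptyElim, ⟨isEmptyElim, isEmptyElim⟩, isEmptyElim, isEmptyElim⟩⟩
  choose NE hNE hNE_gt using hNE
  choose pun hpun_mixed hpun using fun i => (hv i).exists_punishment
  obtain ⟨K, hK, path, hpath, hpath_sum⟩ := exists_periodic_of_rat_weights α hα0 hα1
  obtain ⟨ι, hι, hι_sum⟩ := exists_periodic_enum N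
  obtain ⟨M, hM⟩ := Finite.bddAbove_range fun x : N × (∀ i, A i) => |u x.1 x.2|
  replace hM : ∀ i a, |u i a| ≤ M := fun i a => hM ⟨(i, a), rfl⟩
  have hgap : ∀ i, 0 < ∑ j, (expU (u i) (NE j) - v i) := fun i =>
    (sub_pos.2 (hNE_gt i)).trans_le <| single_le_sum (f := fun j => expU (u i) (NE j) - v i)
      (fun j _ => sub_nonneg.2 ((hv i).le_of_isNash (hNE j))) (mem_univ i)
  obtain ⟨L, hL⟩ := exists_nat_forall_le_mul (fun i => M - v i + K * (2 * M)) hgap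
  set m := Fintype.card N * L
  refine ⟨m, m, fun n hn => ⟨trigger path (n - m) (NE ∘ ι) pun, ?_, fun i f hf => ?_, fun i => ?_⟩⟩
  · refine trigger_isRepNash_of_periodic hn hK hpath (fun i => ?_) hM (fun t => hNE _) (hι.comp NE)
      (fun i => ?_) hpun_mixed hpun
    · rw [hpath_sum, ← hfeas]
      exact mul_le_mul_of_nonneg_left (hIR i) K.cast_nonneg
    · exact (hι_sum fun j => expU (u i) (NE j) - v i).symm ▸ hL i
  · exact (ncard_not_pure_trigger_le (fun t => (hNE _).1) hpun_mixed hf i).trans (by omega)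
  · have hβ0 : 0 ≤ β i := ((hNE i).1 i).ent_nonneg.trans (hβ i _ (hNE i))
    refine Real.sSup_le (fun x ⟨f, hf, hx⟩ => hx ▸ ?_) (by positivity)
    refine (sum_ent_trigger_le (fun t => (hNE _).1) hpun_mixed (Nat.sub_le n m) hf i
      fun t => hβ i _ (hNE _)).trans_eq ?_
    rw [Nat.sub_sub_self hn]
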